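/- Let α and β be nonempty finite types. Let S₁ be a finite set of functions from α to α with a probability assignment c : S₁ → ℝ satisfying 0 < c f for all f ∈ S₁, with transition matrix T₁ defined by (T₁) u v = ∑_{f ∈ S₁, f u = v} c f; similarly let S₂ be a finite set of functions from β to β with probability assignment d : S₂ → ℝ satisfying 0 < d g for all g ∈ S₂, with transition matrix T₂. Suppose the two systems are equivalent, that is, there are bijections h : α ≃ β and μ : S₁ ≃ S₂ such that μ f = h ∘ f ∘ h⁻¹ for every f ∈ S₁. Then for every m ∈ ℕ and all u, v ∈ α, (T₁^m) u v ≠ 0 if and only if (T₂^m) (h u) (h v) ≠ 0. -/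

import Mathlib

/-- The transition matrix of a probabilistic function system:
`T u v = ∑_{f ∈ S, f u = v} c f`. -/
noncomputable def transitionMatrix {α : Type*} [Fintype α] [DecidableEq α]
    (S : Finset (α → α)) (c : (α → α) → ℝ) : Matrix α α ℝ :=
  fun u v => ∑ f ∈ S.filter (fun f => f u = v), c f

/-!
For a nonnegative matrix, an entry of `A ^ (m + 1) = A * A ^ m` is nonzero exactly
when some product `A u w * (A ^ m) w v` is, so the zero pattern of every power is determined by
the zero pattern of `A`. The entry `T₁ u v` is nonzero iff some `f ∈ S₁` sends `u` to `v`, and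
conjugation by `h` turns this into `T₂ (h u) (h v) ≠ 0`; hence `T₁` and `T₂` reindexed along `h`
have the same zero pattern, and so do all their powers.
-/

namespace Matrix

variable {n R : Type*} [Fintype n] [DecidableEq n] [Semiring R]

theorem submatrix_equiv_pow {m : Type*} [Fintype m] [DecidableEq m] (M : Matrix n n R)
    (e : m ≃ n) (k : ℕ) : (M ^ k).submatrix e e = M.submatrix e e ^ k := by
  simpa using map_pow (reindexRingEquiv R e.symm) M k

variable [PartialOrder R] [IsOrderedRing R] [NoZeroDivisors R]

theorem pow_apply_ne_zero_iff_of_apply_ne_zero_iff {A B : Matrix n n R}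
    (hA : ∀ i j, 0 ≤ A i j) (hB : ∀ i j, 0 ≤ B i j) (hAB : ∀ i j, A i j ≠ 0 ↔ B i j ≠ 0)
    (k : ℕ) (i j : n) : (A ^ k) i j ≠ 0 ↔ (B ^ k) i j ≠ 0 := by
  induction k generalizing i j with
  | zero => simp [one_apply]
  | succ k ih =>
    have summand_nonneg {M : Matrix n n R} (hM : ∀ i j, 0 ≤ M i j) (l : n) :
        0 ≤ M i l * (M ^ k) l j :=
      mul_nonneg (hM i l) (pow_apply_nonneg hM k l j)
    rw [pow_succ', pow_succ', mul_apply, mul_apply, Ne, Ne,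
      Finset.sum_eq_zero_iff_of_nonneg fun l _ => summand_nonneg hA l,
      Finset.sum_eq_zero_iff_of_nonneg fun l _ => summand_nonneg hB l]
    simp only [Finset.mem_univ, forall_const, not_forall, ← ne_eq, mul_ne_zero_iff, hAB, ih]

end Matrix

section transitionMatrix

variable {α : Type*} [Fintype α] [DecidableEq α]

theorem transitionMatrix_nonneg {S : Finset (α → α)} {c : (α → α) → ℝ}
    (hc : ∀ f ∈ S, 0 ≤ c f) (u v : α) : 0 ≤ transitionMatrix S c u v :=
  Finset.sum_nonneg fun f hf => hc f (Finset.mem_filter.mp hf).1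

theorem transitionMatrix_ne_zero_iff {S : Finset (α → α)} {c : (α → α) → ℝ}
    (hc : ∀ f ∈ S, 0 < c f) (u v : α) :
    transitionMatrix S c u v ≠ 0 ↔ ∃ f ∈ S, f u = v := by
  rw [← (transitionMatrix_nonneg (fun f hf => (hc f hf).le) u v).lt_iff_ne', transitionMatrix,
    Finset.sum_pos_iff_of_nonneg fun f hf => (hc f (Finset.mem_filter.mp hf).1).le]
  simp only [Finset.mem_filter, and_assoc]
  exact exists_congr fun f => and_congr_right fun hf => and_iff_left (hc f hf)

end transitionMatrix

theorem exists_mem_conj_apply_eq_iff {α β : Type*} {S₁ : Set (α → α)} {S₂ : Set (β → β)}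
    (h : α ≃ β) {μ : (α → α) → (β → β)} (hmaps : Set.MapsTo μ S₁ S₂) (hsurj : Set.SurjOn μ S₁ S₂)
    (hμ : ∀ f ∈ S₁, μ f = h ∘ f ∘ h.symm) (u v : α) :
    (∃ g ∈ S₂, g (h u) = h v) ↔ ∃ f ∈ S₁, f u = v := by
  constructor
  · rintro ⟨g, hg, hgu⟩
    obtain ⟨f, hf, rfl⟩ := hsurj hg
    refine ⟨f, hf, h.injective ?_⟩
    simpa [hμ f hf] using hgu
  · rintro ⟨f, hf, rfl⟩
    exact ⟨μ f, hmaps hf, by simp [hμ f hf]⟩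

theorem psn_equiv_transition_pow_ne_zero_iff_general {α β : Type*}
    [Fintype α] [DecidableEq α] [Fintype β] [DecidableEq β]
    (S₁ : Finset (α → α)) (c : (α → α) → ℝ) (hc : ∀ f ∈ S₁, 0 < c f)
    (S₂ : Finset (β → β)) (d : (β → β) → ℝ) (hd : ∀ g ∈ S₂, 0 < d g)
    (h : α ≃ β) (μ : (α → α) → (β → β))
    (hbij : Set.BijOn μ (↑S₁) (↑S₂))
    (hμ : ∀ f ∈ S₁, μ f = (h : α → β) ∘ f ∘ (h.symm : β → α)) :
    ∀ (m : ℕ) (u v : α),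
      ((transitionMatrix S₁ c) ^ m) u v ≠ 0 ↔
        ((transitionMatrix S₂ d) ^ m) (h u) (h v) ≠ 0 := by
  intro m u v
  have same_pattern : ∀ i j, transitionMatrix S₁ c i j ≠ 0 ↔
      (transitionMatrix S₂ d).submatrix h h i j ≠ 0 := fun i j => by
    rw [Matrix.submatrix_apply, transitionMatrix_ne_zero_iff hc, transitionMatrix_ne_zero_iff hd]
    exact (exists_mem_conj_apply_eq_iff h hbij.mapsTo hbij.surjOn hμ i j).symm
  change _ ↔ (transitionMatrix S₂ d ^ m).submatrix h h u v ≠ 0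
  rw [Matrix.submatrix_equiv_pow]
  exact Matrix.pow_apply_ne_zero_iff_of_apply_ne_zero_iff
    (transitionMatrix_nonneg fun f hf => (hc f hf).le)
    (fun i j => transitionMatrix_nonneg (fun g hg => (hd g hg).le) (h i) (h j)) same_pattern m u v

/-- Proposition 7.2 of the paper: equivalent probabilistic sequential networks
have matching nonzero patterns of all powers of their transition matrices. -/
theorem psn_equiv_transition_pow_ne_zero_iff {α β : Type*}
    [Fintype α] [Nonempty α] [DecidableEq α] [Fintype β] [Nonempty β] [DecidableEq β]
    (S₁ : Finset (α → α)) (c : (α → α) → ℝ) (hc : ∀ f ∈ S₁, 0 < c f)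
    (S₂ : Finset (β → β)) (d : (β → β) → ℝ) (hd : ∀ g ∈ S₂, 0 < d g)
    (h : α ≃ β) (μ : (α → α) → (β → β))
    (hbij : Set.BijOn μ (↑S₁) (↑S₂))
    (hμ : ∀ f ∈ S₁, μ f = (h : α → β) ∘ f ∘ (h.symm : β → α)) :
    ∀ (m : ℕ) (u v : α),
      ((transitionMatrix S₁ c) ^ m) u v ≠ 0 ↔
        ((transitionMatrix S₂ d) ^ m) (h u) (h v) ≠ 0 :=
  psn_equiv_transition_pow_ne_zero_iff_general S₁ c hc S₂ d hd h μ hbij hμ
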